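/- arXiv:2408.14223 — 3 statements merged into one kernel-verified Lean document; each statement's English description precedes it below -/
import Mathlib

section
/- Under the assumption that there exists a parameter θ such that y(k) − G_m(z) r̃(θ,k) ≡ 0 for all k, the FRIT model-matching error can be rewritten as a linear-in-parameters residual: y(k) − G_m(z) r̃(θ,k) equals a scalar multiple of φᵀ(k)θ − d(k), where φ(k) = β(z)(1 − G_m(z)) y(k) and d(k) = G_m(z) u(k), provided the controller has the form C(z,θ) = θᵀβ(z) and u(k) = C(z,θ)(r̃(θ,k) − y(k)). Consequently the A-FRIT evaluation function J(θ) = Σₖ (φᵀ(k)θ − d(k))² is a convex function of θ. -/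
/-!
The controller `C = ∑ i, θ i • β i` commutes with `G_m` because every filter `β i` does, so
`d = G_m u = G_m C (r̃ - y) = C (G_m r̃ - G_m y)`, while `φᵀθ = C (y - G_m y)`. Subtracting, the
`G_m y` terms cancel and `φᵀθ - d = C (y - G_m r̃)`, which vanishes under exact matching. The
A-FRIT criterion is a finite sum of squares of affine functions of `θ`, hence convex.
-/

open Finset

theorem ConvexOn.finset_sum {ι 𝕜 E β : Type*} [Field 𝕜] [LinearOrder 𝕜] [IsStrictOrderedRing 𝕜]
    [AddCommGroup E] [Module 𝕜 E] [AddCommGroup β] [PartialOrder β] [IsOrderedAddMonoid β]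
    [Module 𝕜 β] {s : Set E} (hs : Convex 𝕜 s) (t : Finset ι) {f : ι → E → β}
    (hf : ∀ i ∈ t, ConvexOn 𝕜 s (f i)) : ConvexOn 𝕜 s (fun x => ∑ i ∈ t, f i x) := by
  classical
  induction t using Finset.induction_on with
  | empty => simpa using convexOn_const (0 : β) hs
  | insert j t hj ih =>
    simp only [sum_insert hj]
    exact (hf j (mem_insert_self j t)).add (ih fun i hi => hf i (mem_insert_of_mem hi))

theorem convexOn_sq_sub {E : Type*} [AddCommGroup E] [Module ℝ E] (ℓ : E →ₗ[ℝ] ℝ) (c : ℝ) :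
    ConvexOn ℝ Set.univ (fun x => (ℓ x - c) ^ 2) := by
  simpa [Function.comp_def, neg_add_eq_sub] using
    ((even_two.convexOn_pow (𝕜 := ℝ)).translate_right (-c)).comp_linearMap ℓ

theorem convexOn_sum_sq_dotProduct_sub {ι κ : Type*} [Fintype κ] (t : Finset ι)
    (φ : ι → κ → ℝ) (d : ι → ℝ) :
    ConvexOn ℝ Set.univ (fun θ : κ → ℝ => ∑ k ∈ t, ((∑ i, φ k i * θ i) - d k) ^ 2) :=
  ConvexOn.finset_sum convex_univ t fun k _ =>
    convexOn_sq_sub (dotProductBilin ℝ ℝ (φ k)) (d k)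

theorem map_sub_map_map_sub_of_commute {R M : Type*} [CommRing R] [AddCommGroup M] [Module R M]
    {G C : Module.End R M} (h : Commute G C) (y r : M) :
    C (y - G y) - G (C (r - y)) = C (y - G r) := by
  rw [← Module.End.mul_apply, h.eq, Module.End.mul_apply]
  simp only [map_sub]
  abel

theorem stmt_1_general {n : ℕ}
    (β : Fin n → ((ℕ → ℝ) →ₗ[ℝ] (ℕ → ℝ)))
    (Gm : (ℕ → ℝ) →ₗ[ℝ] (ℕ → ℝ))
    (hcomm : ∀ i, Gm ∘ₗ β i = β i ∘ₗ Gm)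
    (θ : Fin n → ℝ) (y u rt : ℕ → ℝ)
    -- u = C(z,θ)(r̃ − y) with C(z,θ) = θᵀβ(z)
    (hu : u = (∑ i, θ i • β i) (rt - y))
    (φ : ℕ → Fin n → ℝ) (hφ : ∀ k i, φ k i = (β i) (y - Gm y) k)
    (d : ℕ → ℝ) (hd : ∀ k, d k = Gm u k) (N : ℕ) :
    (∀ k, (∑ i, φ k i * θ i) - d k
        = (∑ i, θ i • β i) (y - Gm rt) k) ∧
    ConvexOn ℝ Set.univ
      (fun θ' : Fin n → ℝ =>
        ∑ k ∈ Finset.range N, ((∑ i, φ k i * θ' i) - d k) ^ 2) := by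
  have hC : Commute Gm (∑ i, θ i • β i) :=
    Commute.sum_right _ _ _ fun i _ => (show Commute Gm (β i) from hcomm i).smul_right (θ i)
  refine ⟨fun k => ?_, convexOn_sum_sq_dotProduct_sub _ φ d⟩
  have hφθ : ∑ i, φ k i * θ i = (∑ i, θ i • β i) (y - Gm y) k := by
    simp [hφ, LinearMap.sum_apply, mul_comm]
  rw [hφθ, hd, hu, ← map_sub_map_map_sub_of_commute hC y rt]
  rfl

/-- FRIT matching error as linear-in-parameters residual, and convexity. -/
theorem stmt_1 {n : ℕ}
    (β : Fin n → ((ℕ → ℝ) →ₗ[ℝ] (ℕ → ℝ)))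
    (Gm : (ℕ → ℝ) →ₗ[ℝ] (ℕ → ℝ))
    (hcomm : ∀ i, Gm ∘ₗ β i = β i ∘ₗ Gm)
    (θ : Fin n → ℝ) (y u rt : ℕ → ℝ)
    -- u = C(z,θ)(r̃ − y) with C(z,θ) = θᵀβ(z)
    (hu : u = (∑ i, θ i • β i) (rt - y))
    -- assumption: exact matching y − G_m r̃ ≡ 0
    (hmatch : y - Gm rt = 0)
    (φ : ℕ → Fin n → ℝ) (hφ : ∀ k i, φ k i = (β i) (y - Gm y) k)
    (d : ℕ → ℝ) (hd : ∀ k, d k = Gm u k) (N : ℕ) :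
    (∀ k, (∑ i, φ k i * θ i) - d k
        = (∑ i, θ i • β i) (y - Gm rt) k) ∧
    ConvexOn ℝ Set.univ
      (fun θ' : Fin n → ℝ =>
        ∑ k ∈ Finset.range N, ((∑ i, φ k i * θ' i) - d k) ^ 2) :=
  stmt_1_general β Gm hcomm θ y u rt hu φ hφ d hd N
end

section
/- Directional forgetting preserves positive definiteness of the information matrix: if R(k−1) ∈ ℝⁿˣⁿ is symmetric positive definite, μ ∈ (0,1], φ(k) ∈ ℝⁿ with φ(k) ≠ 0, and R(k) = [I − M(k)]R(k−1) + φ(k)φ(k)ᵀ with M(k) = (1−μ)·R(k−1)φ(k)φ(k)ᵀ/(φ(k)ᵀR(k−1)φ(k)), then R(k) is positive definite. -/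
open Matrix

private lemma vmv_mulVec {n : ℕ} (u v x : Fin n → ℝ) :
    vecMulVec u v *ᵥ x = (v ⬝ᵥ x) • u := by
  ext i
  simp [mulVec, vecMulVec_apply, dotProduct, Finset.sum_mul, Finset.mul_sum,
    mul_comm, mul_left_comm]

private lemma vmv_transpose {n : ℕ} (u v : Fin n → ℝ) :
    (vecMulVec u v)ᵀ = vecMulVec v u := by
  ext i j
  simp [vecMulVec_apply, mul_comm]

private lemma vmv_mul {n : ℕ} (u v : Fin n → ℝ) (A : Matrix (Fin n) (Fin n) ℝ) :
    vecMulVec u v * A = vecMulVec u (v ᵥ* A) := by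
  ext i j
  simp [Matrix.mul_apply, vecMulVec_apply, vecMul, dotProduct, Finset.mul_sum, mul_assoc]

/-- directional forgetting preserves positive definiteness. -/
theorem stmt_3 {n : ℕ} (R : Matrix (Fin n) (Fin n) ℝ) (hR : R.PosDef)
    (μ : ℝ) (hμ : μ ∈ Set.Ioc (0 : ℝ) 1)
    (φ : Fin n → ℝ) (hφ : φ ≠ 0)
    (M : Matrix (Fin n) (Fin n) ℝ)
    (hM : M = ((1 - μ) / (φ ⬝ᵥ R *ᵥ φ)) • vecMulVec (R *ᵥ φ) φ)
    (Rk : Matrix (Fin n) (Fin n) ℝ)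
    (hRk : Rk = (1 - M) * R + vecMulVec φ φ) :
    Rk.PosDef := by
  obtain ⟨hμ0, hμ1⟩ := hμ
  have hRT : Rᵀ = R := by
    have := hR.1
    rwa [Matrix.IsHermitian, conjTranspose_eq_transpose_of_trivial] at this
  set w : Fin n → ℝ := R *ᵥ φ with hw
  set d : ℝ := φ ⬝ᵥ R *ᵥ φ with hd
  have hd0 : 0 < d := by
    have := hR.dotProduct_mulVec_pos hφ
    simpa using this
  set c : ℝ := (1 - μ) / d with hc
  have hvw : φ ᵥ* R = w := by rw [← mulVec_transpose, hRT]
  -- rewrite Rk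
  have hRk' : Rk = R - c • vecMulVec w w + vecMulVec φ φ := by
    rw [hRk, hM, sub_mul, one_mul, Matrix.smul_mul, vmv_mul, hvw]
  -- symmetry of quadratic form
  have hsym : ∀ x y : Fin n → ℝ, x ⬝ᵥ R *ᵥ y = y ⬝ᵥ R *ᵥ x := by
    intro x y
    have hRe : ∀ i j, R i j = R j i := by
      intro i j
      conv_lhs => rw [← hRT]
      rw [Matrix.transpose_apply]
    calc x ⬝ᵥ R *ᵥ y = ∑ i, ∑ j, x i * R i j * y j := by
          simp [dotProduct, mulVec, Finset.mul_sum, mul_assoc]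
      _ = ∑ j, ∑ i, y j * R j i * x i := by
          rw [Finset.sum_comm]
          exact Finset.sum_congr rfl fun j _ => Finset.sum_congr rfl fun i _ => by
            rw [hRe i j]; ring
      _ = y ⬝ᵥ R *ᵥ x := by
          simp [dotProduct, mulVec, Finset.mul_sum, mul_assoc]
  refine posDef_iff_dotProduct_mulVec.mpr ⟨?_, ?_⟩
  · rw [Matrix.IsHermitian, conjTranspose_eq_transpose_of_trivial, hRk']
    simp only [transpose_add, transpose_sub, transpose_smul, vmv_transpose, hRT]
  · intro x hx
    have hq : (star x) ⬝ᵥ Rk *ᵥ x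
        = x ⬝ᵥ R *ᵥ x - c * ((x ⬝ᵥ R *ᵥ φ) * (x ⬝ᵥ R *ᵥ φ)) + (φ ⬝ᵥ x) * (φ ⬝ᵥ x) := by
      rw [show star x = x from rfl, hRk']
      rw [Matrix.add_mulVec, Matrix.sub_mulVec, Matrix.smul_mulVec,
        vmv_mulVec, vmv_mulVec]
      have hwx : w ⬝ᵥ x = x ⬝ᵥ R *ᵥ φ := by rw [hw, dotProduct_comm]
      have hxw : x ⬝ᵥ w = x ⬝ᵥ R *ᵥ φ := rfl
      simp [dotProduct_add, dotProduct_sub, dotProduct_smul, hwx, hxw,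
        dotProduct_comm φ x]
    set q : ℝ := x ⬝ᵥ R *ᵥ x with hqdef
    set a : ℝ := x ⬝ᵥ R *ᵥ φ with ha
    have hq0 : 0 < q := by
      have := hR.dotProduct_mulVec_pos hx
      simpa using this
    -- Cauchy-Schwarz: a^2 ≤ q * d
    have hcs : a * a ≤ q * d := by
      have h0 : 0 ≤ (d • x - a • φ) ⬝ᵥ R *ᵥ (d • x - a • φ) := by
        have := hR.posSemidef.dotProduct_mulVec_nonneg (d • x - a • φ)
        simpa using this
      have hexp : (d • x - a • φ) ⬝ᵥ R *ᵥ (d • x - a • φ)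
          = d * (q * d - a * a) := by
        rw [Matrix.mulVec_sub, Matrix.mulVec_smul, Matrix.mulVec_smul,
          dotProduct_sub, sub_dotProduct, sub_dotProduct,
          smul_dotProduct, smul_dotProduct, dotProduct_smul, dotProduct_smul,
          dotProduct_smul, dotProduct_smul]
        have h1 : φ ⬝ᵥ R *ᵥ x = a := hsym φ x
        simp only [smul_dotProduct, dotProduct_smul, smul_eq_mul]
        rw [h1]
        ring
      rw [hexp] at h0
      nlinarith
    rw [hq]
    have hkey : c * (a * a) ≤ (1 - μ) * q := by
      rw [hc, div_mul_eq_mul_div, div_le_iff₀ hd0]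
      have h1μ : 0 ≤ 1 - μ := by linarith
      nlinarith
    nlinarith [mul_self_nonneg (φ ⬝ᵥ x)]
end

section
/- The information matrix after the directional-forgetting update satisfies the lower bound R(k) ⪰ μ R(k−1) in the Loewner order, where R(k) = (I − M(k))R(k−1) + φφᵀ, M(k) = (1−μ)R(k−1)φφᵀ/(φᵀR(k−1)φ), μ ∈ (0,1], and φ ≠ 0. -/
/-! Subtracting `μ R` leaves `(1 - μ)` times the rank-one downdate
`R - (Rφ)(Rφ)ᵀ / (φᵀRφ)` plus `φφᵀ`. The downdate is positive semidefinite by the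
Cauchy–Schwarz inequality for the semi-inner product `(x, y) ↦ xᵀRy`, and `1 - μ ≥ 0`. -/

open Matrix

namespace Matrix

variable {ι : Type*} [Fintype ι]

theorem PosSemidef.dotProduct_mulVec_sq_le {R : Matrix ι ι ℝ} (hR : R.PosSemidef)
    (x y : ι → ℝ) : (x ⬝ᵥ R *ᵥ y) ^ 2 ≤ (x ⬝ᵥ R *ᵥ x) * (y ⬝ᵥ R *ᵥ y) := by
  classical
  have hsymm : LinearMap.IsSymm R.toBilin' :=
    LinearMap.BilinForm.isSymm_iff.1 (isSymm_toBilin'_iff_isSymm.2 hR.isHermitian)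
  simpa only [toBilin'_apply'] using
    R.toBilin'.apply_sq_le_of_symm
      (fun z => by simpa [toBilin'_apply'] using hR.dotProduct_mulVec_nonneg z) hsymm x y

theorem IsHermitian.one_sub_smul_vecMulVec_mulVec_mul [DecidableEq ι] {R : Matrix ι ι ℝ}
    (hR : R.IsHermitian) (c : ℝ) (v : ι → ℝ) :
    (1 - c • vecMulVec (R *ᵥ v) v) * R = R - c • vecMulVec (R *ᵥ v) (R *ᵥ v) := by
  have hvR : v ᵥ* R = R *ᵥ v := by
    conv_lhs => rw [← hR.eq, conjTranspose_eq_transpose_of_trivial]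
    exact vecMul_transpose R v
  rw [sub_mul, one_mul, smul_mul, vecMulVec_mul, hvR]

theorem PosSemidef.sub_inv_smul_vecMulVec_mulVec {R : Matrix ι ι ℝ} (hR : R.PosSemidef)
    (v : ι → ℝ) : (R - (v ⬝ᵥ R *ᵥ v)⁻¹ • vecMulVec (R *ᵥ v) (R *ᵥ v)).PosSemidef := by
  set s := v ⬝ᵥ R *ᵥ v
  have hRv : (vecMulVec (R *ᵥ v) (R *ᵥ v)).IsHermitian := by
    simpa using (posSemidef_vecMulVec_self_star (R *ᵥ v)).isHermitian
  refine .of_dotProduct_mulVec_nonneg (hR.isHermitian.sub (hRv.smul (.all _))) fun x => ?_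
  have hform : star x ⬝ᵥ (R - s⁻¹ • vecMulVec (R *ᵥ v) (R *ᵥ v)) *ᵥ x
      = x ⬝ᵥ R *ᵥ x - s⁻¹ * (x ⬝ᵥ R *ᵥ v) ^ 2 := by
    simp only [star_trivial, sub_mulVec, smul_mulVec, vecMulVec_mulVec, op_smul_eq_smul,
      dotProduct_sub, dotProduct_smul, smul_eq_mul, dotProduct_comm (R *ᵥ v) x]
    ring
  have hcs : s⁻¹ * (x ⬝ᵥ R *ᵥ v) ^ 2 ≤ x ⬝ᵥ R *ᵥ x := by
    have hquad (z : ι → ℝ) : 0 ≤ z ⬝ᵥ R *ᵥ z := by simpa using hR.dotProduct_mulVec_nonneg z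
    rcases (hquad v).eq_or_lt with hs | hs
    · simpa [s, ← hs] using hquad x
    · rw [inv_mul_le_iff₀ hs, mul_comm]
      exact hR.dotProduct_mulVec_sq_le x v
  rw [hform]
  linarith

end Matrix

theorem stmt_11_general {n : ℕ} (R : Matrix (Fin n) (Fin n) ℝ) (hR : R.PosDef)
    (μ : ℝ) (hμ : μ ∈ Set.Ioc (0 : ℝ) 1)
    (φ : Fin n → ℝ)
    (M : Matrix (Fin n) (Fin n) ℝ)
    (hM : M = ((1 - μ) / (φ ⬝ᵥ R *ᵥ φ)) • vecMulVec (R *ᵥ φ) φ)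
    (Rk : Matrix (Fin n) (Fin n) ℝ)
    (hRk : Rk = (1 - M) * R + vecMulVec φ φ) :
    (Rk - μ • R).PosSemidef := by
  have hsplit : Rk - μ • R = (1 - μ) • (R - (φ ⬝ᵥ R *ᵥ φ)⁻¹ • vecMulVec (R *ᵥ φ) (R *ᵥ φ))
      + vecMulVec φ φ := by
    rw [hRk, hM, hR.isHermitian.one_sub_smul_vecMulVec_mulVec_mul, div_eq_mul_inv]
    module
  rw [hsplit]
  exact ((hR.posSemidef.sub_inv_smul_vecMulVec_mulVec φ).smul (sub_nonneg.2 hμ.2)).add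
    (by simpa using posSemidef_vecMulVec_self_star φ)

/-- directional forgetting lower bound R(k) ⪰ μ R(k−1). -/
theorem stmt_11 {n : ℕ} (R : Matrix (Fin n) (Fin n) ℝ) (hR : R.PosDef)
    (μ : ℝ) (hμ : μ ∈ Set.Ioc (0 : ℝ) 1)
    (φ : Fin n → ℝ) (hφ : φ ≠ 0)
    (M : Matrix (Fin n) (Fin n) ℝ)
    (hM : M = ((1 - μ) / (φ ⬝ᵥ R *ᵥ φ)) • vecMulVec (R *ᵥ φ) φ)
    (Rk : Matrix (Fin n) (Fin n) ℝ)
    (hRk : Rk = (1 - M) * R + vecMulVec φ φ) :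
    (Rk - μ • R).PosSemidef :=
  stmt_11_general R hR μ hμ φ M hM Rk hRk
end
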